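/- The capacity with an infinite battery exceeds the full-side-information no-battery capacity: for on-off arrivals, p_on·C_Sm(√E) ≤ (1/2)·log(1 + p_on·E). -/

import Mathlib

/-!
For an input law `F` supported in `[-a, a]`, compare the output density `p = F ∗ φ` with the
centred Gaussian density `q` of variance `v = 1 + a²`. Splitting
`log (φ (y - t) / p y) = log (φ (y - t) / q y) + log (q y / p y)`, the first part integrates
against `φ (· - t)` to `log v / 2 - 1 / 2 + (1 + t²) / (2 v)`, which is at most `log v / 2`
since `|t| ≤ a`, while the second integrates over `F` (Fubini) to
`∫ p log (q / p) ≤ ∫ q - ∫ p = 0` (Gibbs). Hence `C_Sm(a) ≤ ½ log (1 + a²)`, and concavity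
of `log` turns `p_on · ½ log (1 + E)` into at most `½ log (1 + p_on E)`.
-/

open MeasureTheory Real Set

/-- The standard Gaussian density. -/
noncomputable def φ (x : ℝ) : ℝ := (Real.sqrt (2 * π))⁻¹ * Real.exp (-x ^ 2 / 2)

/-- Mutual information of an input measure `μ` through the channel with conditional
output density `g y t`. -/
noncomputable def MI (μ : Measure ℝ) (g : ℝ → ℝ → ℝ) : ℝ :=
  ∫ t, (∫ y : ℝ, g y t * Real.log (g y t / ∫ s, g y s ∂μ)) ∂μ

/-- Smith's amplitude-constrained AWGN capacity under amplitude constraint `a`. -/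
noncomputable def CSm (a : ℝ) : ℝ :=
  sSup {x : ℝ | ∃ F : Measure ℝ, IsProbabilityMeasure F ∧ F (Icc (-a) a) = 1 ∧
    x = MI F (fun y t => φ (y - t))}

open ProbabilityTheory
open scoped NNReal

lemma integral_mul_log_div_le_integral_sub {α : Type*} [MeasurableSpace α] {μ : Measure α}
    {p q : α → ℝ} (hp : ∀ x, 0 < p x) (hq : ∀ x, 0 < q x) (hpi : Integrable p μ)
    (hqi : Integrable q μ) (hpq : Integrable (fun x => p x * log (q x / p x)) μ) :
    ∫ x, p x * log (q x / p x) ∂μ ≤ ∫ x, q x ∂μ - ∫ x, p x ∂μ := by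
  rw [← integral_sub hqi hpi]
  refine integral_mono hpq (hqi.sub hpi) fun x => ?_
  calc p x * log (q x / p x) ≤ p x * (q x / p x - 1) :=
        mul_le_mul_of_nonneg_left (log_le_sub_one_of_pos (div_pos (hq x) (hp x))) (hp x).le
    _ = q x - p x := by field_simp [(hp x).ne']

section Gaussian

lemma log_gaussianPDFReal (μ : ℝ) {v : ℝ≥0} (hv : v ≠ 0) (x : ℝ) :
    log (gaussianPDFReal μ v x) = -log (2 * π * v) / 2 - (x - μ) ^ 2 / (2 * v) := by
  have : 0 < 2 * π * v := by positivity
  rw [gaussianPDFReal, log_mul (by positivity) (exp_ne_zero _), log_inv, log_exp,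
    log_sqrt this.le]
  ring

lemma integrable_gaussianReal_iff {μ : ℝ} {v : ℝ≥0} (hv : v ≠ 0) {f : ℝ → ℝ} :
    Integrable f (gaussianReal μ v) ↔ Integrable (fun x => gaussianPDFReal μ v x * f x) := by
  rw [gaussianReal_of_var_ne_zero _ hv, integrable_withDensity_iff_integrable_smul'
    (measurable_gaussianPDF _ _) (ae_of_all _ fun _ => gaussianPDF_lt_top)]
  simp [toReal_gaussianPDF]

lemma integral_sq_gaussianReal (μ : ℝ) (v : ℝ≥0) :
    ∫ x, x ^ 2 ∂gaussianReal μ v = v + μ ^ 2 := by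
  have h := variance_eq_sub (memLp_id_gaussianReal (μ := μ) (v := v) 2)
  simp only [variance_id_gaussianReal, Pi.pow_apply, id, integral_id_gaussianReal] at h
  linarith

lemma integrable_quadratic_gaussianReal (μ : ℝ) (v : ℝ≥0) (c₀ c₁ c₂ : ℝ) :
    Integrable (fun x => c₀ + c₁ * x + c₂ * x ^ 2) (gaussianReal μ v) :=
  ((integrable_const c₀).add (((memLp_id_gaussianReal 1).integrable le_rfl).const_mul c₁)).add
    ((memLp_id_gaussianReal 2).integrable_sq.const_mul c₂)

lemma integral_quadratic_gaussianReal (μ : ℝ) (v : ℝ≥0) (c₀ c₁ c₂ : ℝ) :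
    ∫ x, c₀ + c₁ * x + c₂ * x ^ 2 ∂gaussianReal μ v
      = c₀ + c₁ * μ + c₂ * (v + μ ^ 2) := by
  have h₁ : Integrable (fun x : ℝ => c₁ * x) (gaussianReal μ v) :=
    ((memLp_id_gaussianReal 1).integrable le_rfl).const_mul c₁
  have h₂ : Integrable (fun x : ℝ => c₂ * x ^ 2) (gaussianReal μ v) :=
    (memLp_id_gaussianReal 2).integrable_sq.const_mul c₂
  rw [integral_add ?_ h₂, integral_add (integrable_const c₀) h₁, integral_const_mul,
    integral_const_mul, integral_id_gaussianReal, integral_sq_gaussianReal]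
  · simp
  · exact (integrable_const c₀).add h₁

end Gaussian

section StandardGaussian

lemma phi_sub_eq_gaussianPDFReal (t y : ℝ) : φ (y - t) = gaussianPDFReal t 1 y := by
  simp [φ, gaussianPDFReal]

lemma phi_pos (x : ℝ) : 0 < φ x := by
  unfold φ
  positivity

lemma norm_phi_le (x : ℝ) : ‖φ x‖ ≤ (√(2 * π))⁻¹ := by
  rw [Real.norm_of_nonneg (phi_pos x).le]
  exact mul_le_of_le_one_right (by positivity) (exp_le_one_iff.2 (by nlinarith [sq_nonneg x]))

@[fun_prop]
lemma continuous_phi : Continuous φ := by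
  unfold φ
  fun_prop

lemma integral_phi_sub_mul (t : ℝ) (f : ℝ → ℝ) :
    ∫ y, φ (y - t) * f y = ∫ y, f y ∂gaussianReal t 1 := by
  simp only [phi_sub_eq_gaussianPDFReal, integral_gaussianReal_eq_integral_smul one_ne_zero,
    smul_eq_mul]

lemma integrable_phi_sub_mul_iff (t : ℝ) {f : ℝ → ℝ} :
    Integrable (fun y => φ (y - t) * f y) ↔ Integrable f (gaussianReal t 1) := by
  simp only [phi_sub_eq_gaussianPDFReal, integrable_gaussianReal_iff one_ne_zero]

lemma integral_phi_sub_mul_add_sq (t K : ℝ) :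
    Integrable (fun y => φ (y - t) * (K + y ^ 2)) ∧
    ∫ y, φ (y - t) * (K + y ^ 2) = K + 1 + t ^ 2 := by
  have h := integral_quadratic_gaussianReal t 1 K 0 1
  simp only [zero_mul, add_zero, one_mul, NNReal.coe_one] at h
  rw [integrable_phi_sub_mul_iff, integral_phi_sub_mul, h]
  exact ⟨by simpa using integrable_quadratic_gaussianReal t 1 K 0 1, by ring⟩

lemma integral_phi_sub_mul_log_div_gaussianPDFReal (t : ℝ) {v : ℝ≥0} (hv : v ≠ 0) :
    Integrable (fun y => φ (y - t) * log (φ (y - t) / gaussianPDFReal 0 v y)) ∧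
    ∫ y, φ (y - t) * log (φ (y - t) / gaussianPDFReal 0 v y)
      = log v / 2 - 1 / 2 + (1 + t ^ 2) / (2 * v) := by
  have hv' : (0 : ℝ) < v := by positivity
  have hlog (y : ℝ) : log (φ (y - t) / gaussianPDFReal 0 v y)
      = (log v / 2 - t ^ 2 / 2) + t * y + (1 / (2 * v) - 1 / 2) * y ^ 2 := by
    rw [log_div (phi_pos _).ne' (gaussianPDFReal_pos _ _ _ hv).ne', phi_sub_eq_gaussianPDFReal,
      log_gaussianPDFReal _ one_ne_zero, log_gaussianPDFReal _ hv,
      log_mul (by positivity) hv'.ne', NNReal.coe_one]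
    field_simp
    ring
  simp only [hlog, integrable_phi_sub_mul_iff, integral_phi_sub_mul]
  refine ⟨integrable_quadratic_gaussianReal _ _ _ _ _, ?_⟩
  rw [integral_quadratic_gaussianReal, NNReal.coe_one]
  field_simp
  ring

lemma norm_phi_sub_mul_le {r : ℝ → ℝ} {K : ℝ} (hK : ∀ y, |r y| ≤ K + y ^ 2)
    (t y : ℝ) :
    ‖φ (y - t) * r y‖ ≤ φ (y - t) * (K + y ^ 2) := by
  rw [norm_mul, Real.norm_of_nonneg (phi_pos _).le, Real.norm_eq_abs]
  exact mul_le_mul_of_nonneg_left (hK y) (phi_pos _).le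

lemma integrable_phi_sub_mul_of_abs_le {r : ℝ → ℝ} (hr : Measurable r) {K : ℝ}
    (hK : ∀ y, |r y| ≤ K + y ^ 2) (t : ℝ) : Integrable (fun y => φ (y - t) * r y) :=
  (integral_phi_sub_mul_add_sq t K).1.mono' (by fun_prop)
    (ae_of_all _ (norm_phi_sub_mul_le hK t))

end StandardGaussian

noncomputable def outputDensity (F : Measure ℝ) (y : ℝ) : ℝ := ∫ s, φ (y - s) ∂F

lemma integrable_phi_sub (F : Measure ℝ) [IsFiniteMeasure F] (y : ℝ) :
    Integrable (fun s => φ (y - s)) F :=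
  .of_bound (by fun_prop) _ (ae_of_all _ fun s => norm_phi_le (y - s))

lemma measurable_outputDensity (F : Measure ℝ) [SFinite F] : Measurable (outputDensity F) :=
  (continuous_phi.comp (continuous_fst.sub continuous_snd)).stronglyMeasurable
    |>.integral_prod_right' |>.measurable

section OutputDensity

variable {F : Measure ℝ} [IsProbabilityMeasure F] {a : ℝ}

lemma outputDensity_le (y : ℝ) : outputDensity F y ≤ (√(2 * π))⁻¹ := by
  have h := norm_integral_le_of_norm_le_const (μ := F) (ae_of_all _ fun s => norm_phi_le (y - s))
  simp only [probReal_univ, mul_one] at h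
  exact (le_abs_self _).trans h

lemma le_outputDensity (hF : ∀ᵐ s ∂F, |s| ≤ a) (y : ℝ) :
    (√(2 * π))⁻¹ * exp (-(y ^ 2 + a ^ 2)) ≤ outputDensity F y := by
  have hφ : ∀ᵐ s ∂F, (√(2 * π))⁻¹ * exp (-(y ^ 2 + a ^ 2)) ≤ φ (y - s) := by
    filter_upwards [hF] with s hs
    have : s ^ 2 ≤ a ^ 2 := by nlinarith [abs_nonneg s, sq_abs s]
    unfold φ
    gcongr
    nlinarith [sq_nonneg (y + s)]
  have h := integral_mono_ae (integrable_const _) (integrable_phi_sub F y) hφ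
  rwa [integral_const, probReal_univ, one_smul] at h

lemma outputDensity_pos (hF : ∀ᵐ s ∂F, |s| ≤ a) (y : ℝ) : 0 < outputDensity F y :=
  (by positivity : (0 : ℝ) < _).trans_le (le_outputDensity hF y)

lemma abs_log_gaussianPDFReal_div_outputDensity_le (hF : ∀ᵐ s ∂F, |s| ≤ a) {v : ℝ≥0}
    (hv : 1 ≤ v) (y : ℝ) :
    |log (gaussianPDFReal 0 v y / outputDensity F y)| ≤ log v / 2 + a ^ 2 + y ^ 2 := by
  have hv₀ : (0 : ℝ) < v := by positivity
  have hlogv : 0 ≤ log v := log_nonneg (by exact_mod_cast hv)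
  have hp := outputDensity_pos hF y
  have hc : log (√(2 * π))⁻¹ = -log (2 * π) / 2 := by
    rw [log_inv, log_sqrt (by positivity)]; ring
  have hq : log (gaussianPDFReal 0 v y) = -log (2 * π) / 2 - log v / 2 - y ^ 2 / (2 * v) := by
    rw [log_gaussianPDFReal _ (by positivity), log_mul (by positivity) hv₀.ne', sub_zero]; ring
  have hp_le : log (outputDensity F y) ≤ -log (2 * π) / 2 := by
    rw [← hc]; exact log_le_log hp (outputDensity_le y)
  have hp_ge : -log (2 * π) / 2 - (y ^ 2 + a ^ 2) ≤ log (outputDensity F y) := by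
    have := log_le_log (by positivity) (le_outputDensity hF y)
    rwa [log_mul (by positivity) (exp_ne_zero _), log_exp, hc, ← sub_eq_add_neg] at this
  have hy : y ^ 2 / (2 * v) ≤ y ^ 2 := by
    rw [div_le_iff₀ (by positivity)]; nlinarith [sq_nonneg y]
  rw [log_div (gaussianPDFReal_pos _ _ _ (by positivity)).ne' hp.ne', hq, abs_le]
  have hy₀ : 0 ≤ y ^ 2 / (2 * v) := by positivity
  constructor <;> nlinarith [sq_nonneg y]

lemma measurable_log_gaussianPDFReal_div_outputDensity (v : ℝ≥0) :
    Measurable fun y => log (gaussianPDFReal 0 v y / outputDensity F y) :=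
  measurable_log.comp ((measurable_gaussianPDFReal 0 v).div (measurable_outputDensity F))

section Fubini

variable {r : ℝ → ℝ} {K : ℝ}

lemma integrable_prod_phi_sub_mul (hF : ∀ᵐ s ∂F, |s| ≤ a) (hr : Measurable r)
    (hK : ∀ y, |r y| ≤ K + y ^ 2) :
    Integrable (fun z : ℝ × ℝ => φ (z.2 - z.1) * r z.2) (F.prod volume) := by
  have hmeas : AEStronglyMeasurable (fun z : ℝ × ℝ => φ (z.2 - z.1) * r z.2)
      (F.prod volume) :=
    (by fun_prop : Measurable fun z : ℝ × ℝ => φ (z.2 - z.1) * r z.2).aestronglyMeasurable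
  refine (integrable_prod_iff hmeas).2
    ⟨ae_of_all _ (integrable_phi_sub_mul_of_abs_le hr hK), ?_⟩
  refine .of_bound hmeas.norm.integral_prod_right' (K + 1 + a ^ 2) ?_
  filter_upwards [hF] with t ht
  have hnorm : ∫ y, ‖φ (y - t) * r y‖ ≤ K + 1 + t ^ 2 :=
    (integral_phi_sub_mul_add_sq t K).2 ▸
      integral_mono (integrable_phi_sub_mul_of_abs_le hr hK t).norm
        (integral_phi_sub_mul_add_sq t K).1 (norm_phi_sub_mul_le hK t)
  rw [Real.norm_of_nonneg (integral_nonneg fun _ => norm_nonneg _)]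
  nlinarith [sq_abs t, abs_nonneg t]

lemma integral_integral_phi_sub_mul (hF : ∀ᵐ s ∂F, |s| ≤ a) (hr : Measurable r)
    (hK : ∀ y, |r y| ≤ K + y ^ 2) :
    ∫ t, (∫ y, φ (y - t) * r y) ∂F = ∫ y, outputDensity F y * r y := by
  rw [integral_integral_swap (integrable_prod_phi_sub_mul hF hr hK)]
  simp only [outputDensity, integral_mul_const]

lemma integrable_outputDensity_mul (hF : ∀ᵐ s ∂F, |s| ≤ a) (hr : Measurable r)
    (hK : ∀ y, |r y| ≤ K + y ^ 2) :
    Integrable (fun y => outputDensity F y * r y) := by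
  simpa only [outputDensity, integral_mul_const] using
    (integrable_prod_phi_sub_mul hF hr hK).integral_prod_right

end Fubini

lemma integrable_outputDensity (hF : ∀ᵐ s ∂F, |s| ≤ a) : Integrable (outputDensity F) := by
  simpa using integrable_outputDensity_mul hF (r := fun _ => 1) measurable_const (K := 1)
    fun y => by simp [sq_nonneg]

lemma integral_outputDensity (hF : ∀ᵐ s ∂F, |s| ≤ a) : ∫ y, outputDensity F y = 1 := by
  have h := integral_integral_phi_sub_mul hF (r := fun _ => 1) measurable_const
    (K := 1) fun y => by simp [sq_nonneg]
  have h₁ (t : ℝ) : ∫ y, φ (y - t) = 1 := by simpa using integral_phi_sub_mul t fun _ => 1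
  simp only [mul_one, h₁, integral_const, probReal_univ, smul_eq_mul] at h
  exact h.symm

end OutputDensity

section MutualInformation

variable {F : Measure ℝ} [IsProbabilityMeasure F] {a : ℝ} {v : ℝ≥0}

lemma integral_phi_sub_mul_log_div_outputDensity (hF : ∀ᵐ s ∂F, |s| ≤ a) (hv : 1 ≤ v)
    (t : ℝ) :
    ∫ y, φ (y - t) * log (φ (y - t) / outputDensity F y)
      = (log v / 2 - 1 / 2 + (1 + t ^ 2) / (2 * v))
        + ∫ y, φ (y - t) * log (gaussianPDFReal 0 v y / outputDensity F y) := by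
  have hv₀ : v ≠ 0 := (zero_lt_one.trans_le hv).ne'
  obtain ⟨hint, hval⟩ := integral_phi_sub_mul_log_div_gaussianPDFReal t hv₀
  rw [← hval, ← integral_add hint (integrable_phi_sub_mul_of_abs_le
    (measurable_log_gaussianPDFReal_div_outputDensity v)
    (abs_log_gaussianPDFReal_div_outputDensity_le hF hv) t)]
  congr 1 with y
  have hq := gaussianPDFReal_pos 0 v y hv₀
  rw [← mul_add, ← log_mul (div_pos (phi_pos _) hq).ne'
    (div_pos hq (outputDensity_pos hF y)).ne', div_mul_div_cancel₀ hq.ne']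

lemma integral_integral_phi_sub_mul_log_div_outputDensity_nonpos (hF : ∀ᵐ s ∂F, |s| ≤ a)
    (hv : 1 ≤ v) :
    ∫ t, (∫ y, φ (y - t) * log (gaussianPDFReal 0 v y / outputDensity F y)) ∂F ≤ 0 := by
  have hv₀ : v ≠ 0 := (zero_lt_one.trans_le hv).ne'
  have hr := measurable_log_gaussianPDFReal_div_outputDensity (F := F) v
  have hK := abs_log_gaussianPDFReal_div_outputDensity_le hF hv
  rw [integral_integral_phi_sub_mul hF hr hK]
  refine (integral_mul_log_div_le_integral_sub (outputDensity_pos hF)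
    (gaussianPDFReal_pos 0 v · hv₀) (integrable_outputDensity hF)
    (integrable_gaussianPDFReal 0 v) (integrable_outputDensity_mul hF hr hK)).trans_eq ?_
  rw [integral_gaussianPDFReal_eq_one 0 hv₀, integral_outputDensity hF, sub_self]

lemma integral_log_div_two_sub_half_add_le (hF : ∀ᵐ t ∂F, |t| ≤ a) {v : ℝ}
    (hv : 1 + a ^ 2 ≤ v) :
    Integrable (fun t => log v / 2 - 1 / 2 + (1 + t ^ 2) / (2 * v)) F ∧
    ∫ t, (log v / 2 - 1 / 2 + (1 + t ^ 2) / (2 * v)) ∂F ≤ log v / 2 := by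
  have hv₀ : 0 < v := by nlinarith [sq_nonneg a]
  have hlogv : 0 ≤ log v := log_nonneg (by nlinarith [sq_nonneg a])
  have hbound : ∀ᵐ t ∂F, 0 ≤ (1 + t ^ 2) / (2 * v) ∧ (1 + t ^ 2) / (2 * v) ≤ 1 / 2 := by
    filter_upwards [hF] with t ht
    refine ⟨by positivity, (div_le_iff₀ (by positivity)).2 ?_⟩
    nlinarith [sq_abs t, abs_nonneg t]
  have hint : Integrable (fun t => log v / 2 - 1 / 2 + (1 + t ^ 2) / (2 * v)) F := by
    refine .of_bound (by fun_prop) (log v / 2 + 1 / 2) ?_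
    filter_upwards [hbound] with t ht
    rw [Real.norm_eq_abs, abs_le]
    constructor <;> linarith [ht.1, ht.2]
  refine ⟨hint, ?_⟩
  calc _ ≤ ∫ _, log v / 2 ∂F := integral_mono_ae hint (integrable_const _) <| by
        filter_upwards [hbound] with t ht
        linarith [ht.2]
    _ = log v / 2 := by simp

theorem MI_phi_le_half_log (hF : ∀ᵐ t ∂F, |t| ≤ a) :
    MI F (fun y t => φ (y - t)) ≤ 1 / 2 * log (1 + a ^ 2) := by
  set v : ℝ≥0 := ⟨1 + a ^ 2, by positivity⟩
  have hv : 1 ≤ v := by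
    rw [← NNReal.coe_le_coe]; change (1 : ℝ) ≤ 1 + a ^ 2; nlinarith [sq_nonneg a]
  obtain ⟨hA_int, hA_le⟩ := integral_log_div_two_sub_half_add_le hF (v := v) le_rfl
  have hB_int := (integrable_prod_phi_sub_mul hF
    (measurable_log_gaussianPDFReal_div_outputDensity v)
    (abs_log_gaussianPDFReal_div_outputDensity_le hF hv)).integral_prod_left
  have hB_le := integral_integral_phi_sub_mul_log_div_outputDensity_nonpos hF hv
  calc MI F (fun y t => φ (y - t))
      = ∫ t, ((log v / 2 - 1 / 2 + (1 + t ^ 2) / (2 * v))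
          + ∫ y, φ (y - t) * log (gaussianPDFReal 0 v y / outputDensity F y)) ∂F :=
        integral_congr_ae (ae_of_all _ (integral_phi_sub_mul_log_div_outputDensity hF hv))
    _ = ∫ t, (log v / 2 - 1 / 2 + (1 + t ^ 2) / (2 * v)) ∂F
          + ∫ t, (∫ y, φ (y - t) * log (gaussianPDFReal 0 v y / outputDensity F y)) ∂F :=
        integral_add hA_int hB_int
    _ ≤ 1 / 2 * log (1 + a ^ 2) := by
        change _ ≤ 1 / 2 * log v
        linarith

end MutualInformation

lemma CSm_le_half_log (a : ℝ) : CSm a ≤ 1 / 2 * log (1 + a ^ 2) := by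
  have hlog : 0 ≤ log (1 + a ^ 2) := log_nonneg (by nlinarith [sq_nonneg a])
  refine Real.sSup_le ?_ (by linarith)
  rintro x ⟨F, hF, hsupp, rfl⟩
  have hae : ∀ᵐ t ∂F, t ∈ Icc (-a) a :=
    mem_ae_iff.2 ((prob_compl_eq_zero_iff measurableSet_Icc).2 hsupp)
  exact MI_phi_le_half_log (hae.mono fun t ht => abs_le.2 ht)

lemma mul_log_one_add_le_log_one_add_mul {p x : ℝ} (hp₀ : 0 ≤ p) (hp₁ : p ≤ 1)
    (hx : -1 < x) :
    p * log (1 + x) ≤ log (1 + p * x) := by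
  have h := strictConcaveOn_log_Ioi.concaveOn.2 (mem_Ioi.2 one_pos)
    (mem_Ioi.2 (by linarith : 0 < 1 + x)) (sub_nonneg.2 hp₁) hp₀ (by ring)
  simp only [smul_eq_mul, log_one, mul_zero, zero_add, mul_one] at h
  rwa [show 1 - p + p * (1 + x) = 1 + p * x by ring] at h

/-- The infinite-battery AWGN capacity dominates the full-side-information no-battery
capacity: `p_on·C_Sm(√E) ≤ (1/2)·log(1 + p_on·E)`. -/
theorem infinite_battery_dominates (E pon : ℝ) (hE : 0 ≤ E)
    (hpon : pon ∈ Icc (0:ℝ) 1) :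
    pon * CSm (Real.sqrt E) ≤ (1 / 2) * Real.log (1 + pon * E) := by
  have hCSm : CSm (√E) ≤ 1 / 2 * log (1 + E) := by
    simpa [sq_sqrt hE] using CSm_le_half_log (√E)
  calc pon * CSm (√E) ≤ pon * (1 / 2 * log (1 + E)) := mul_le_mul_of_nonneg_left hCSm hpon.1
    _ = 1 / 2 * (pon * log (1 + E)) := by ring
    _ ≤ 1 / 2 * log (1 + pon * E) := by
        gcongr
        exact mul_log_one_add_le_log_one_add_mul hpon.1 hpon.2 (by linarith)
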